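/- arXiv:1502.03289 — 6 statements merged into one kernel-verified Lean document; each statement's English description precedes it below -/
import Mathlib

section
/- Let A and B be n×n real matrices with A·B = B·A, and let t be a real number such that Id - t·A·B is invertible. Then X(t) = A·(Id - t·A·B)⁻¹ satisfies X'(t) = B·X(t)·X(t). -/
open Matrix

attribute [local instance] Matrix.linftyOpNormedRing Matrix.linftyOpNormedAlgebra

/-!
Differentiating the inverse gives `X' = a (1 - s ab)⁻¹ ab (1 - s ab)⁻¹`, and since `b` commutes
with `a` and with `(1 - s ab)⁻¹`, this rearranges to `b X X`.
-/

open scoped Ring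

theorem Commute.ringInverse_right {M₀ : Type*} [MonoidWithZero M₀] {a b : M₀}
    (h : Commute a b) : Commute a b⁻¹ʳ := by
  by_cases hb : IsUnit b
  · obtain ⟨u, rfl⟩ := hb
    rw [Ring.inverse_unit]
    exact h.units_inv_right
  · rw [Ring.inverse_non_unit b hb]
    exact Commute.zero_right a

section NormedAlgebra

variable {𝕜 R : Type*} [NontriviallyNormedField 𝕜] [NormedRing R] [HasSummableGeomSeries R]
  [NormedAlgebra 𝕜 R]

theorem HasDerivAt.ringInverse {f : 𝕜 → R} {f' : R} {x : 𝕜} (hf : HasDerivAt f f' x)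
    (hx : IsUnit (f x)) :
    HasDerivAt (fun y => (f y)⁻¹ʳ) (-((f x)⁻¹ʳ * f' * (f x)⁻¹ʳ)) x := by
  obtain ⟨u, hu⟩ := hx
  have hinv := hasFDerivAt_ringInverse (𝕜 := 𝕜) u
  rw [hu] at hinv
  rw [← hu, Ring.inverse_unit]
  have hcomp := hinv.comp_hasDerivAt x hf
  simp only [_root_.neg_apply, ContinuousLinearMap.mulLeftRight_apply] at hcomp
  exact hcomp

theorem hasDerivAt_ringInverse_one_sub_smul (m : R) {t : 𝕜} (ht : IsUnit (1 - t • m)) :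
    HasDerivAt (fun s : 𝕜 => (1 - s • m)⁻¹ʳ) ((1 - t • m)⁻¹ʳ * m * (1 - t • m)⁻¹ʳ) t := by
  have hlin : HasDerivAt (fun s : 𝕜 => 1 - s • m) (-m) t := by
    simpa using ((hasDerivAt_id t).smul_const m).const_sub 1
  simpa using hlin.ringInverse ht

theorem hasDerivAt_mul_ringInverse_one_sub_smul_mul {a b : R} (hab : Commute a b) {t : 𝕜}
    (ht : IsUnit (1 - t • (a * b))) :
    HasDerivAt (fun s : 𝕜 => a * (1 - s • (a * b))⁻¹ʳ)
      (b * (a * (1 - t • (a * b))⁻¹ʳ) * (a * (1 - t • (a * b))⁻¹ʳ)) t := by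
  convert (hasDerivAt_ringInverse_one_sub_smul (a * b) ht).const_mul a using 1
  set i := (1 - t • (a * b))⁻¹ʳ
  have hbi : Commute b i := ((Commute.one_right b).sub_right
    ((hab.symm.mul_right (Commute.refl b)).smul_right t)).ringInverse_right
  have hbX : Commute b (a * i) := hab.symm.mul_right hbi
  calc b * (a * i) * (a * i) = a * i * (a * i) * b := by rw [mul_assoc, (hbX.mul_right hbX).eq]
    _ = a * (i * (a * b) * i) := by simp only [mul_assoc, hbi.eq]

end NormedAlgebra

/-- If `A` and `B` commute and `Id - t • (A*B)` is invertible, then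
`X(t) = A * (Id - t • A*B)⁻¹` satisfies `X'(t) = B * X(t) * X(t)`. -/
theorem generalized_euler_ode_left {n : ℕ} (A B : Matrix (Fin n) (Fin n) ℝ)
    (hAB : A * B = B * A) (t : ℝ) (h : IsUnit (1 - t • (A * B))) :
    HasDerivAt (fun s : ℝ => A * (1 - s • (A * B))⁻¹)
      (B * (A * (1 - t • (A * B))⁻¹) * (A * (1 - t • (A * B))⁻¹)) t := by
  simp only [nonsing_inv_eq_ringInverse]
  exact hasDerivAt_mul_ringInverse_one_sub_smul_mul hAB h
end

section
/- Let A, B be symmetric commuting n×n real matrices such that max{⟨A·B·x, x⟩ : ⟨x,x⟩ = 1} ≤ 0 (i.e., A·B is negative semidefinite). Then Id - t·A·B is invertible for all t ≥ 0, so the solution X(t) = A·(Id - t·A·B)⁻¹ of the ODE X' = B·X·X exists for all forward time. -/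
open Matrix

namespace Matrix

variable {ι K : Type*} [Fintype ι] [DecidableEq ι] [Field K]

theorem isUnit_of_dotProduct_mulVec_pos [Preorder K] {N : Matrix ι ι K}
    (hN : ∀ x : ι → K, x ≠ 0 → 0 < N *ᵥ x ⬝ᵥ x) : IsUnit N := by
  refine mulVec_injective_iff_isUnit.1 fun x y hxy => by_contra fun hne => ?_
  have hpos := hN (x - y) (sub_ne_zero.2 hne)
  rw [mulVec_sub, hxy, sub_self, zero_dotProduct] at hpos
  exact hpos.false

theorem isUnit_one_sub_smul_of_dotProduct_mulVec_nonpos [LinearOrder K] [IsStrictOrderedRing K]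
    {M : Matrix ι ι K} (hM : ∀ x : ι → K, M *ᵥ x ⬝ᵥ x ≤ 0) {t : K} (ht : 0 ≤ t) :
    IsUnit (1 - t • M) := by
  refine isUnit_of_dotProduct_mulVec_pos fun x hx => ?_
  have hxx : 0 < x ⬝ᵥ x :=
    (Finset.sum_nonneg fun i _ => mul_self_nonneg (x i)).lt_of_ne
      (Ne.symm (dotProduct_self_eq_zero.not.2 hx))
  calc 0 < x ⬝ᵥ x - t * (M *ᵥ x ⬝ᵥ x) := by nlinarith [hM x]
    _ = (1 - t • M) *ᵥ x ⬝ᵥ x := by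
      rw [sub_mulVec, one_mulVec, smul_mulVec, sub_dotProduct, smul_dotProduct, smul_eq_mul]

end Matrix

theorem eternal_of_negSemidef_general {n : ℕ} (A B : Matrix (Fin n) (Fin n) ℝ)
    (hneg : ∀ x : Fin n → ℝ, (A * B).mulVec x ⬝ᵥ x ≤ 0) :
    ∀ t : ℝ, 0 ≤ t → IsUnit (1 - t • (A * B)) :=
  fun _ ht => isUnit_one_sub_smul_of_dotProduct_mulVec_nonpos hneg ht

/-- If `A, B` are symmetric commuting matrices and `A*B` is negative semidefinite, then
`Id - t • A*B` is invertible for all `t ≥ 0`, so the solution `X(t) = A (Id - t A B)⁻¹`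
exists for all forward time. -/
theorem eternal_of_negSemidef {n : ℕ} (A B : Matrix (Fin n) (Fin n) ℝ)
    (hA : A.IsSymm) (hB : B.IsSymm) (hAB : A * B = B * A)
    (hneg : ∀ x : Fin n → ℝ, (A * B).mulVec x ⬝ᵥ x ≤ 0) :
    ∀ t : ℝ, 0 ≤ t → IsUnit (1 - t • (A * B)) :=
  eternal_of_negSemidef_general A B hneg
end

section
/- Let A be a symmetric n×n real matrix with A ≠ 0 (equivalently, A has a nonzero eigenvalue). Let λ be the eigenvalue of A of largest absolute value. Then the maximal interval of existence of the solution X(t) = A·(Id - t·A)⁻¹ of X' = X·X containing 0 is (1/μ₋, 1/μ₊) with appropriate conventions, where μ₊ = max(spectrum of A) (interpreted as +∞ bound if μ₊ ≤ 0) and μ₋ = min(spectrum of A) (interpreted as -∞ bound if μ₋ ≥ 0). In particular if all eigenvalues of A are nonpositive, X(t) exists for all t ≥ 0. -/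
/-! For `t ≠ 0` we have `1 - t • A = t • (t⁻¹ - A)`, so `1 - t • A` is invertible exactly when
`t⁻¹` is not an eigenvalue. A positive `t⁻¹` in the spectrum forces `t ≥ 1 / μ₊`, a negative one
`t ≤ 1 / μ₋`; and the real spectrum of a matrix is finite, so `μ₊` and `μ₋` are themselves
eigenvalues as soon as they are nonzero (`sSup ∅ = sInf ∅ = 0`). -/

section Field

variable {𝕜 R : Type*} [Field 𝕜] [Ring R] [Algebra 𝕜 R]

theorem isUnit_one_sub_smul_iff_inv_notMem_spectrum (a : R) {t : 𝕜} (ht : t ≠ 0) :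
    IsUnit (1 - t • a) ↔ t⁻¹ ∉ spectrum 𝕜 a := by
  rw [spectrum.mem_iff, not_not, Algebra.algebraMap_eq_smul_one]
  simpa [Units.smul_def] using (IsUnit.smul_sub_iff_sub_inv_smul (Units.mk0 t ht)⁻¹ a).symm

end Field

namespace Real

theorem csSup_mem_of_pos {S : Set ℝ} (hS : S.Finite) (hpos : 0 < sSup S) : sSup S ∈ S := by
  have hne : S.Nonempty := Set.nonempty_iff_ne_empty.2 fun h => by simp [h] at hpos
  exact hne.csSup_mem hS

theorem csInf_mem_of_neg {S : Set ℝ} (hS : S.Finite) (hneg : sInf S < 0) : sInf S ∈ S := by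
  have hne : S.Nonempty := Set.nonempty_iff_ne_empty.2 fun h => by simp [h] at hneg
  exact hne.csInf_mem hS

theorem one_div_csSup_le_of_inv_mem {S : Set ℝ} (hS : BddAbove S) {t : ℝ} (ht : 0 < t)
    (hmem : t⁻¹ ∈ S) : 0 < sSup S ∧ 1 / sSup S ≤ t := by
  have hle : t⁻¹ ≤ sSup S := le_csSup hS hmem
  have hinv : 0 < t⁻¹ := inv_pos.mpr ht
  refine ⟨hinv.trans_le hle, ?_⟩
  simpa using one_div_le_one_div_of_le hinv hle

theorem le_one_div_csInf_of_inv_mem {S : Set ℝ} (hS : BddBelow S) {t : ℝ} (ht : t < 0)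
    (hmem : t⁻¹ ∈ S) : sInf S < 0 ∧ t ≤ 1 / sInf S := by
  have hle : sInf S ≤ t⁻¹ := csInf_le hS hmem
  have hinv : t⁻¹ < 0 := inv_lt_zero.mpr ht
  refine ⟨hle.trans_lt hinv, ?_⟩
  simpa using one_div_le_one_div_of_neg_of_le hinv hle

end Real

section RealAlgebra

variable {R : Type*} [Ring R] [Algebra ℝ R] {a : R}

theorem isUnit_one_sub_smul_of_lt_one_div_csSup_of_one_div_csInf_lt (hfin : (spectrum ℝ a).Finite) {t : ℝ}
    (hsup : 0 < sSup (spectrum ℝ a) → t < 1 / sSup (spectrum ℝ a))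
    (hinf : sInf (spectrum ℝ a) < 0 → 1 / sInf (spectrum ℝ a) < t) :
    IsUnit (1 - t • a) := by
  rcases lt_trichotomy t 0 with hneg | rfl | hpos
  · rw [isUnit_one_sub_smul_iff_inv_notMem_spectrum a hneg.ne]
    intro hmem
    obtain ⟨hinf_neg, hle⟩ := Real.le_one_div_csInf_of_inv_mem hfin.bddBelow hneg hmem
    exact (hinf hinf_neg).not_ge hle
  · simp
  · rw [isUnit_one_sub_smul_iff_inv_notMem_spectrum a hpos.ne']
    intro hmem
    obtain ⟨hsup_pos, hle⟩ := Real.one_div_csSup_le_of_inv_mem hfin.bddAbove hpos hmem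
    exact (hsup hsup_pos).not_ge hle

theorem not_isUnit_one_sub_one_div_smul_of_mem_spectrum {μ : ℝ} (hμ : μ ∈ spectrum ℝ a)
    (hμ0 : μ ≠ 0) : ¬ IsUnit (1 - (1 / μ) • a) := by
  rw [isUnit_one_sub_smul_iff_inv_notMem_spectrum a (one_div_ne_zero hμ0), one_div, inv_inv]
  exact not_not.mpr hμ

theorem isUnit_one_sub_smul_of_spectrum_nonpos (hnp : ∀ μ ∈ spectrum ℝ a, μ ≤ 0) {t : ℝ}
    (ht : 0 ≤ t) : IsUnit (1 - t • a) := by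
  rcases ht.eq_or_lt with rfl | hpos
  · simp
  rw [isUnit_one_sub_smul_iff_inv_notMem_spectrum a hpos.ne']
  exact fun hmem => (hnp _ hmem).not_gt (inv_pos.mpr hpos)

end RealAlgebra

theorem maximal_interval_of_existence_general {n : ℕ} (A : Matrix (Fin n) (Fin n) ℝ) :
    (∀ t : ℝ, (0 < sSup (spectrum ℝ A) → t < 1 / sSup (spectrum ℝ A)) →
        (sInf (spectrum ℝ A) < 0 → 1 / sInf (spectrum ℝ A) < t) →
        IsUnit (1 - t • A)) ∧
      (0 < sSup (spectrum ℝ A) → ¬ IsUnit (1 - (1 / sSup (spectrum ℝ A)) • A)) ∧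
      (sInf (spectrum ℝ A) < 0 → ¬ IsUnit (1 - (1 / sInf (spectrum ℝ A)) • A)) ∧
      ((∀ lam ∈ spectrum ℝ A, lam ≤ 0) → ∀ t : ℝ, 0 ≤ t → IsUnit (1 - t • A)) := by
  have hfin : (spectrum ℝ A).Finite := Matrix.finite_real_spectrum
  exact ⟨fun _ => isUnit_one_sub_smul_of_lt_one_div_csSup_of_one_div_csInf_lt hfin,
    fun hpos => not_isUnit_one_sub_one_div_smul_of_mem_spectrum
      (Real.csSup_mem_of_pos hfin hpos) hpos.ne',
    fun hneg => not_isUnit_one_sub_one_div_smul_of_mem_spectrum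
      (Real.csInf_mem_of_neg hfin hneg) hneg.ne,
    fun hnp _ => isUnit_one_sub_smul_of_spectrum_nonpos hnp⟩

/-- For a nonzero symmetric matrix `A` with `μ₊ = sSup (spectrum ℝ A)` and
`μ₋ = sInf (spectrum ℝ A)`, the matrix `Id - t • A` is invertible for all `t` strictly
between `1/μ₋` and `1/μ₊` (with no constraint on the corresponding side when `μ₊ ≤ 0`
resp. `μ₋ ≥ 0`), and singular at the endpoints `1/μ₊` (if `μ₊ > 0`) and `1/μ₋`
(if `μ₋ < 0`). In particular, if all eigenvalues are nonpositive, the solution exists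
for all `t ≥ 0`. -/
theorem maximal_interval_of_existence {n : ℕ} (A : Matrix (Fin n) (Fin n) ℝ)
    (hA : A.IsSymm) (hA0 : A ≠ 0) :
    (∀ t : ℝ, (0 < sSup (spectrum ℝ A) → t < 1 / sSup (spectrum ℝ A)) →
        (sInf (spectrum ℝ A) < 0 → 1 / sInf (spectrum ℝ A) < t) →
        IsUnit (1 - t • A)) ∧
      (0 < sSup (spectrum ℝ A) → ¬ IsUnit (1 - (1 / sSup (spectrum ℝ A)) • A)) ∧
      (sInf (spectrum ℝ A) < 0 → ¬ IsUnit (1 - (1 / sInf (spectrum ℝ A)) • A)) ∧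
      ((∀ lam ∈ spectrum ℝ A, lam ≤ 0) → ∀ t : ℝ, 0 ≤ t → IsUnit (1 - t • A)) :=
  maximal_interval_of_existence_general A
end

section
/- If n is odd, then every n×n real matrix A has at least one real eigenvalue; consequently, for the Euler ODE X' = X·X on odd-dimensional W, every initial condition A whose real eigenvalues are not all zero leads to finite time blowup (forward or backward), and there is no open set of initial conditions with global-in-both-directions solutions given by X(t) = A·(Id - t·A)⁻¹. -/
open Matrix Polynomial Filter

/-!
A real polynomial of odd degree tends to `-∞` at `-∞` and to `+∞` at `+∞`, so by the
intermediate value theorem it has a real root; applied to the characteristic polynomial, every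
real matrix of odd size has a real eigenvalue `λ`. If `λ ≠ 0` then `1 - λ⁻¹ A` is singular,
which is the blowup of `A (1 - tA)⁻¹` at `t = 1/λ`. Finally, `A + ε • 1` has the eigenvalue
`λ + ε`, and every neighbourhood of `A` contains such a shift with `λ + ε ≠ 0`, so no nonempty
open set consists of initial conditions with global solutions.
-/

theorem Odd.tendsto_pow_atBot {α : Type*} [Ring α] [LinearOrder α] [IsStrictOrderedRing α]
    {n : ℕ} (hn : Odd n) : Tendsto (fun x : α => x ^ n) atBot atBot := by
  have h := tendsto_neg_atTop_atBot.comp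
    ((tendsto_pow_atTop hn.pos.ne').comp (tendsto_neg_atBot_atTop (G := α)))
  exact h.congr fun x => by simp [hn.neg_pow]

theorem Polynomial.Monic.exists_isRoot_of_odd_natDegree {p : ℝ[X]} (hp : p.Monic)
    (hodd : Odd p.natDegree) : ∃ x, p.IsRoot x := by
  have hdeg : 0 < p.degree := natDegree_pos_iff_degree_pos.mp hodd.pos
  have h_top : Tendsto p.eval atTop atTop :=
    p.tendsto_atTop_of_leadingCoeff_nonneg hdeg (by simp [hp.leadingCoeff])
  have h_bot : Tendsto p.eval atBot atBot :=
    p.isEquivalent_atBot_lead.symm.tendsto_atBot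
      (by simpa [hp.leadingCoeff] using hodd.tendsto_pow_atBot)
  exact p.continuous.surjective h_top h_bot 0

theorem Matrix.exists_det_smul_one_sub_eq_zero {ι : Type*} [Fintype ι] [DecidableEq ι]
    (hι : Odd (Fintype.card ι)) (A : Matrix ι ι ℝ) :
    ∃ lam : ℝ, (lam • (1 : Matrix ι ι ℝ) - A).det = 0 := by
  obtain ⟨lam, hlam⟩ :=
    A.charpoly_monic.exists_isRoot_of_odd_natDegree (by rwa [A.charpoly_natDegree_eq_dim])
  refine ⟨lam, ?_⟩
  rw [← hlam.eq_zero, eval_charpoly, smul_one_eq_diagonal, scalar_apply]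

theorem Matrix.not_isUnit_one_sub_inv_smul {ι K : Type*} [Fintype ι] [DecidableEq ι] [Field K]
    {A : Matrix ι ι K} {lam : K} (hlam : lam ≠ 0) (h : (lam • (1 : Matrix ι ι K) - A).det = 0) :
    ¬ IsUnit (1 - lam⁻¹ • A) := by
  have h_factor : (1 : Matrix ι ι K) - lam⁻¹ • A = lam⁻¹ • (lam • 1 - A) := by
    rw [smul_sub, smul_smul, inv_mul_cancel₀ hlam, one_smul]
  rw [isUnit_iff_isUnit_det, h_factor, det_smul, h, mul_zero]
  exact not_isUnit_zero

/-- If `n` is odd, every real `n × n` matrix has a real eigenvalue; every matrix with a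
nonzero real eigenvalue leads to finite time blowup of `X' = X X` (some `Id - t • A` is
singular with `t ≠ 0`); and there is no nonempty open set of initial conditions whose
solutions `X(t) = A (Id - tA)⁻¹` are global in both time directions. -/
theorem odd_dimension_blowup {n : ℕ} (hn : Odd n) :
    (∀ A : Matrix (Fin n) (Fin n) ℝ,
        ∃ lam : ℝ, (lam • (1 : Matrix (Fin n) (Fin n) ℝ) - A).det = 0) ∧
      (∀ A : Matrix (Fin n) (Fin n) ℝ,
        (∃ lam : ℝ, lam ≠ 0 ∧ (lam • (1 : Matrix (Fin n) (Fin n) ℝ) - A).det = 0) →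
          ∃ t : ℝ, t ≠ 0 ∧ ¬ IsUnit (1 - t • A)) ∧
      ¬ ∃ U : Set (Matrix (Fin n) (Fin n) ℝ), IsOpen U ∧ U.Nonempty ∧
          ∀ A ∈ U, ∀ t : ℝ, IsUnit (1 - t • A) := by
  have real_eigenvalue : ∀ A : Matrix (Fin n) (Fin n) ℝ,
      ∃ lam : ℝ, (lam • (1 : Matrix (Fin n) (Fin n) ℝ) - A).det = 0 :=
    exists_det_smul_one_sub_eq_zero (by rwa [Fintype.card_fin])
  have blowup : ∀ A : Matrix (Fin n) (Fin n) ℝ,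
      (∃ lam : ℝ, lam ≠ 0 ∧ (lam • (1 : Matrix (Fin n) (Fin n) ℝ) - A).det = 0) →
        ∃ t : ℝ, t ≠ 0 ∧ ¬ IsUnit (1 - t • A) :=
    fun _ ⟨lam, hlam, h⟩ => ⟨lam⁻¹, inv_ne_zero hlam, not_isUnit_one_sub_inv_smul hlam h⟩
  refine ⟨real_eigenvalue, blowup, ?_⟩
  rintro ⟨U, hU, ⟨A, hA⟩, h_global⟩
  obtain ⟨lam, hlam⟩ := real_eigenvalue A
  obtain ⟨ε, hεU, hε⟩ : ∃ ε : ℝ, A + ε • 1 ∈ U ∧ ε ≠ -lam :=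
    (dense_compl_singleton (-lam)).inter_open_nonempty ((fun ε : ℝ => A + ε • 1) ⁻¹' U)
      (hU.preimage (by fun_prop)) ⟨0, by simpa using hA⟩
  have h_shift : ((lam + ε) • 1 - (A + ε • 1)).det = 0 := by
    rwa [add_smul, add_sub_add_right_eq_sub]
  obtain ⟨t, -, ht⟩ := blowup (A + ε • 1) ⟨lam + ε, by grind, h_shift⟩
  exact ht (h_global _ hεU t)
end

section
/- The set of n×n real matrices having at least one nonzero real eigenvalue contains a nonempty open set (e.g., a neighborhood of the identity matrix), and for n even, the set of matrices with no real eigenvalues also contains a nonempty open set. Hence for n even, both finite-time-blowup initial data and eternal-solution initial data for X' = X·X form sets with nonempty interior. -/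
/-!
The condition `det (1 - A) < 0` is open, and under it the characteristic polynomial of `A`,
monic and negative at `1`, has a root in `(1, ∞)`. A real eigenvalue `r` of `A` makes
`r ^ 2 + 1 ≥ 1` a spectral value of `A * A + 1`, so the open condition `‖A * A + 1‖ < 1`
(for a submultiplicative norm) excludes real eigenvalues; in even dimension it holds at any
`J` with `J * J = -1`.
-/

open Matrix Polynomial Filter

theorem Polynomial.Monic.exists_isRoot_gt_of_eval_neg {p : ℝ[X]} (hp : p.Monic) {a : ℝ}
    (ha : p.eval a < 0) : ∃ c, a < c ∧ p.IsRoot c := by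
  have hdeg : 0 < p.degree := by
    refine natDegree_pos_iff_degree_pos.mp (Nat.pos_of_ne_zero fun h => ?_)
    rw [hp.natDegree_eq_zero.mp h, eval_one] at ha
    linarith
  have htop : Tendsto (fun x => p.eval x) atTop atTop :=
    p.tendsto_atTop_of_leadingCoeff_nonneg hdeg (by simp [hp.leadingCoeff])
  obtain ⟨b, hb, hab⟩ := ((htop.eventually_gt_atTop 0).and (eventually_ge_atTop a)).exists
  obtain ⟨c, hc, hpc⟩ := intermediate_value_Icc hab p.continuous.continuousOn ⟨ha.le, hb.le⟩
  exact ⟨c, hc.1.lt_of_ne (by rintro rfl; linarith), hpc⟩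

theorem spectrum.notMem_of_norm_mul_self_add_one_lt_one {A : Type*} [NormedRing A]
    [NormedAlgebra ℝ A] [CompleteSpace A] [NormOneClass A] {a : A} (ha : ‖a * a + 1‖ < 1)
    (r : ℝ) : r ∉ spectrum ℝ a := by
  intro hr
  have hmem : r ^ 2 + 1 ∈ spectrum ℝ (a * a + 1) := by
    have := spectrum.subset_polynomial_aeval a (X ^ 2 + 1) (Set.mem_image_of_mem _ hr)
    simpa [sq] using this
  have hle := (spectrum.norm_le_norm_of_mem hmem).trans_lt ha
  rw [Real.norm_of_nonneg (by positivity)] at hle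
  nlinarith [sq_nonneg r]

namespace Matrix

variable {ι : Type*} [Fintype ι] [DecidableEq ι]

theorem det_smul_one_sub_eq_zero_iff_mem_spectrum {K : Type*} [Field K] {A : Matrix ι ι K}
    {r : K} : (r • 1 - A).det = 0 ↔ r ∈ spectrum K A := by
  rw [mem_spectrum_iff_isRoot_charpoly, IsRoot.def, eval_charpoly, scalar_apply,
    smul_one_eq_diagonal]

theorem exists_det_smul_one_sub_eq_zero_gt_of_det_neg {A : Matrix ι ι ℝ} {a : ℝ}
    (ha : (a • 1 - A).det < 0) : ∃ r, a < r ∧ (r • 1 - A).det = 0 := by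
  have hroot := A.charpoly_monic.exists_isRoot_gt_of_eval_neg (a := a)
  simp only [IsRoot.def, eval_charpoly, scalar_apply, ← smul_one_eq_diagonal] at hroot
  exact hroot ha

theorem exists_det_one_sub_neg [Nonempty ι] : ∃ A : Matrix ι ι ℝ, (1 - A).det < 0 := by
  let i : ι := Classical.arbitrary ι
  refine ⟨1 - diagonal (Function.update 1 i (-1)), ?_⟩
  rw [sub_sub_cancel, det_diagonal, Finset.prod_update_of_mem (Finset.mem_univ i)]
  simp

theorem exists_mul_self_eq_neg_one_of_even {R : Type*} [CommRing R] {n : ℕ} (hn : Even n) :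
    ∃ J : Matrix (Fin n) (Fin n) R, J * J = -1 := by
  obtain ⟨m, rfl⟩ := hn
  refine ⟨reindex finSumFinEquiv finSumFinEquiv (fromBlocks 0 (-1) 1 0), ?_⟩
  have hblocks : fromBlocks 0 (-1) 1 0 * fromBlocks 0 (-1) 1 0 =
      -(1 : Matrix (Fin m ⊕ Fin m) (Fin m ⊕ Fin m) R) := by
    simp [fromBlocks_multiply, ← fromBlocks_one, fromBlocks_neg]
  rw [← coe_reindexAlgEquiv R R, ← map_mul, hblocks, map_neg, map_one]

section LinftyOpNorm

attribute [local instance] Matrix.linftyOpNormedRing Matrix.linftyOpNormedAlgebra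

theorem det_smul_one_sub_ne_zero_of_norm_mul_self_add_one_lt_one {A : Matrix ι ι ℝ}
    (hA : ‖A * A + 1‖ < 1) (r : ℝ) : (r • 1 - A).det ≠ 0 := by
  cases isEmpty_or_nonempty ι
  · simp [det_isEmpty]
  · rw [Ne, det_smul_one_sub_eq_zero_iff_mem_spectrum]
    exact spectrum.notMem_of_norm_mul_self_add_one_lt_one hA r

theorem exists_isOpen_nonempty_forall_det_smul_one_sub_ne_zero {n : ℕ} (hn : Even n) :
    ∃ U : Set (Matrix (Fin n) (Fin n) ℝ), IsOpen U ∧ U.Nonempty ∧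
      ∀ A ∈ U, ∀ r : ℝ, (r • 1 - A).det ≠ 0 := by
  obtain ⟨J, hJ⟩ := exists_mul_self_eq_neg_one_of_even (R := ℝ) hn
  refine ⟨{A | ‖A * A + 1‖ < 1}, isOpen_lt (by fun_prop) continuous_const,
    ⟨J, by simp [hJ]⟩, fun A hA => det_smul_one_sub_ne_zero_of_norm_mul_self_add_one_lt_one hA⟩

end LinftyOpNorm

end Matrix

/-- The set of matrices with a nonzero real eigenvalue contains a nonempty open set, and
for `n` even the set of matrices with no real eigenvalue also contains a nonempty open
set: both blowup data and eternal data for `X' = X X` have nonempty interior. -/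
theorem open_sets_of_blowup_and_eternal_data {n : ℕ} (hn : 0 < n) :
    (∃ U : Set (Matrix (Fin n) (Fin n) ℝ), IsOpen U ∧ U.Nonempty ∧
        ∀ A ∈ U, ∃ lam : ℝ, lam ≠ 0 ∧ (lam • (1 : Matrix (Fin n) (Fin n) ℝ) - A).det = 0) ∧
      (Even n → ∃ U : Set (Matrix (Fin n) (Fin n) ℝ), IsOpen U ∧ U.Nonempty ∧
        ∀ A ∈ U, ∀ lam : ℝ, (lam • (1 : Matrix (Fin n) (Fin n) ℝ) - A).det ≠ 0) := by
  have : Nonempty (Fin n) := Fin.pos_iff_nonempty.mp hn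
  refine ⟨⟨{A | (1 - A).det < 0}, ?_, exists_det_one_sub_neg, fun A hA => ?_⟩,
    exists_isOpen_nonempty_forall_det_smul_one_sub_ne_zero⟩
  · exact isOpen_lt (continuous_const.sub continuous_id).matrix_det continuous_const
  · obtain ⟨r, hr, hrA⟩ :=
      exists_det_smul_one_sub_eq_zero_gt_of_det_neg (a := 1) (by rwa [one_smul])
    exact ⟨r, (zero_lt_one.trans hr).ne', hrA⟩
end

section
/- Let A, B be symmetric commuting n×n real matrices with λ_max(A·B) = 1/T > 0, and let w be a unit eigenvector with A·B·w = (1/T)·w. Then for t ∈ [0, T), the solution X(t) = A·(Id - t·A·B)⁻¹ satisfies X(t)·(Id - t·A·B)·w = A·w, and ⟨X(t)w, w'⟩ → ∞ as t → T⁻ for a suitable vector w' whenever A·w ≠ 0; i.e., the blowup time of the forward solution is exactly T. -/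
/-! On unit vectors `⟪A B x, x⟫ ≤ 1/T`, hence `⟪(1 - t A B) x, x⟫ ≥ (1 - t/T) |x|² > 0` for
`0 ≤ t < T`, so `1 - t A B` is invertible. On the eigenvector `w` it acts as multiplication by
`1 - t/T`, so `X(t) w = (1 - t/T)⁻¹ A w`, and `A w ≠ 0` because `B (A w) = A B w = w / T`.
Pairing with `w' = A w` gives `(1 - t/T)⁻¹ |A w|² → ∞`. -/

open Matrix Filter Topology

section RayleighQuotient

variable {ι : Type*} [Fintype ι]

lemma mulVec_dotProduct_self_le_of_mem_upperBounds {M : Matrix ι ι ℝ} {μ : ℝ}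
    (hμ : μ ∈ upperBounds {r : ℝ | ∃ x : ι → ℝ, x ⬝ᵥ x = 1 ∧ M *ᵥ x ⬝ᵥ x = r})
    (x : ι → ℝ) : M *ᵥ x ⬝ᵥ x ≤ μ * (x ⬝ᵥ x) := by
  rcases eq_or_ne x 0 with rfl | hx
  · simp
  set s := x ⬝ᵥ x
  have hs : 0 < s := by simpa using dotProduct_star_self_pos_iff.2 hx
  set c := (√s)⁻¹
  have hc : c ^ 2 * s = 1 := by
    rw [inv_pow, Real.sq_sqrt hs.le, inv_mul_cancel₀ hs.ne']
  have hcx : c ^ 2 * (M *ᵥ x ⬝ᵥ x) ≤ μ :=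
    hμ ⟨c • x, by simp only [dotProduct_smul, smul_dotProduct, smul_eq_mul]; linear_combination hc,
      by simp only [mulVec_smul, dotProduct_smul, smul_dotProduct, smul_eq_mul]; ring⟩
  calc M *ᵥ x ⬝ᵥ x = s * (c ^ 2 * (M *ᵥ x ⬝ᵥ x)) := by linear_combination -(M *ᵥ x ⬝ᵥ x) * hc
    _ ≤ s * μ := by gcongr
    _ = μ * s := mul_comm _ _

lemma isUnit_one_sub_smul_of_mulVec_dotProduct_self_le [DecidableEq ι] {M : Matrix ι ι ℝ}
    {μ t : ℝ} (hM : ∀ x, M *ᵥ x ⬝ᵥ x ≤ μ * (x ⬝ᵥ x)) (ht : 0 ≤ t) (htμ : t * μ < 1) :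
    IsUnit (1 - t • M) := by
  refine mulVec_injective_iff_isUnit.1 fun x y hxy => sub_eq_zero.1 ?_
  set z := x - y
  have hz : (1 - t • M) *ᵥ z = 0 := by rw [mulVec_sub, hxy, sub_self]
  have hquad : z ⬝ᵥ z = t * (M *ᵥ z ⬝ᵥ z) := by
    rw [sub_mulVec, one_mulVec, smul_mulVec, sub_eq_zero] at hz
    rw [← smul_eq_mul, ← smul_dotProduct, ← hz]
  have hnonneg : 0 ≤ z ⬝ᵥ z := by simpa using dotProduct_star_self_nonneg z
  have : z ⬝ᵥ z ≤ 0 := by nlinarith [mul_le_mul_of_nonneg_left (hM z) ht]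
  exact dotProduct_self_eq_zero.1 (le_antisymm this hnonneg)

end RayleighQuotient

lemma Matrix.inv_mulVec_eq_inv_smul_of_mulVec_eq_smul {ι K : Type*} [Fintype ι] [DecidableEq ι]
    [Field K] {M : Matrix ι ι K} (hM : IsUnit M) {v : ι → K} {c : K} (hv : M *ᵥ v = c • v) :
    M⁻¹ *ᵥ v = c⁻¹ • v := by
  have hinv : c • M⁻¹ *ᵥ v = v := by
    rw [← mulVec_smul, ← hv, mulVec_mulVec, nonsing_inv_mul _ ((isUnit_iff_isUnit_det M).1 hM),
      one_mulVec]
  rcases eq_or_ne c 0 with rfl | hc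
  · rw [zero_smul] at hinv
    simp [← hinv]
  · rw [← hinv, smul_smul, inv_mul_cancel₀ hc, one_smul, hinv]

lemma Matrix.mulVec_ne_zero_of_commute {ι R : Type*} [Fintype ι] [CommRing R] [NoZeroDivisors R]
    {A B : Matrix ι ι R} (hAB : A * B = B * A) {w : ι → R} {c : R}
    (hw : (A * B) *ᵥ w = c • w) (hc : c ≠ 0) (hw0 : w ≠ 0) : A *ᵥ w ≠ 0 := by
  intro hAw
  rw [hAB, ← mulVec_mulVec, hAw, mulVec_zero, eq_comm, smul_eq_zero] at hw
  exact hw.elim hc hw0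

lemma tendsto_inv_one_sub_div_nhdsLT {T : ℝ} (hT : 0 < T) :
    Tendsto (fun t : ℝ => (1 - t / T)⁻¹) (𝓝[<] T) atTop := by
  refine Tendsto.inv_tendsto_nhdsGT_zero (tendsto_nhdsWithin_iff.2 ⟨?_, ?_⟩)
  · exact ((by fun_prop : Continuous fun t : ℝ => 1 - t / T).tendsto' T 0
      (by simp [hT.ne'])).mono_left nhdsWithin_le_nhds
  · filter_upwards [self_mem_nhdsWithin] with t (ht : t < T)
    simpa using (div_lt_one hT).2 ht

theorem blowup_time_exactly_T_general {n : ℕ} (A B : Matrix (Fin n) (Fin n) ℝ)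
    (hAB : A * B = B * A) (T : ℝ) (hT : 0 < T)
    (w : Fin n → ℝ) (hw : w ⬝ᵥ w = 1) (heig : (A * B).mulVec w = (1 / T) • w)
    (hmax : IsGreatest {r : ℝ | ∃ x : Fin n → ℝ, x ⬝ᵥ x = 1 ∧ (A * B).mulVec x ⬝ᵥ x = r}
      (1 / T)) :
    (∀ t ∈ Set.Ico (0 : ℝ) T,
        IsUnit (1 - t • (A * B)) ∧
        ((A * (1 - t • (A * B))⁻¹) * (1 - t • (A * B))).mulVec w = A.mulVec w ∧
        (A * (1 - t • (A * B))⁻¹).mulVec w = (1 - t / T)⁻¹ • A.mulVec w) ∧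
      A.mulVec w ≠ 0 ∧
      ∃ w' : Fin n → ℝ,
        Tendsto (fun t : ℝ => (A * (1 - t • (A * B))⁻¹).mulVec w ⬝ᵥ w')
          (nhdsWithin T (Set.Iio T)) atTop := by
  have hw0 : w ≠ 0 := by rintro rfl; simp at hw
  have hAw : A *ᵥ w ≠ 0 := mulVec_ne_zero_of_commute hAB heig (by positivity) hw0
  have hX : ∀ t ∈ Set.Ico (0 : ℝ) T, IsUnit (1 - t • (A * B)) ∧
      ((A * (1 - t • (A * B))⁻¹) * (1 - t • (A * B))) *ᵥ w = A *ᵥ w ∧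
      (A * (1 - t • (A * B))⁻¹) *ᵥ w = (1 - t / T)⁻¹ • A *ᵥ w := by
    rintro t ⟨ht0, htT⟩
    have hunit : IsUnit (1 - t • (A * B)) :=
      isUnit_one_sub_smul_of_mulVec_dotProduct_self_le
        (mulVec_dotProduct_self_le_of_mem_upperBounds hmax.2) ht0
        (by rw [mul_one_div]; exact (div_lt_one hT).2 htT)
    have hvec : (1 - t • (A * B)) *ᵥ w = (1 - t / T) • w := by
      rw [sub_mulVec, one_mulVec, smul_mulVec, heig, smul_smul, mul_one_div, sub_smul, one_smul]
    refine ⟨hunit, ?_, ?_⟩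
    · rw [mul_assoc, nonsing_inv_mul _ ((isUnit_iff_isUnit_det _).1 hunit), mul_one]
    · rw [← mulVec_mulVec, inv_mulVec_eq_inv_smul_of_mulVec_eq_smul hunit hvec, mulVec_smul]
  refine ⟨hX, hAw, A *ᵥ w, ?_⟩
  have hpos : 0 < A *ᵥ w ⬝ᵥ A *ᵥ w := by simpa using dotProduct_star_self_pos_iff.2 hAw
  refine ((tendsto_inv_one_sub_div_nhdsLT hT).atTop_mul_const hpos).congr' ?_
  filter_upwards [Ioo_mem_nhdsLT hT] with t ht
  rw [(hX t ⟨ht.1.le, ht.2⟩).2.2, smul_dotProduct, smul_eq_mul]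

/-- For symmetric commuting `A, B` with largest eigenvalue `1/T > 0` of `A*B` attained at
the unit eigenvector `w`, the solution `X(t) = A (Id - t A B)⁻¹` exists on `[0, T)`,
satisfies `X(t) (Id - t A B) w = A w`, and some matrix coefficient `⟨X(t) w, w'⟩` tends to
infinity as `t → T⁻`: the blowup time is exactly `T`. -/
theorem blowup_time_exactly_T {n : ℕ} (A B : Matrix (Fin n) (Fin n) ℝ)
    (hA : A.IsSymm) (hB : B.IsSymm) (hAB : A * B = B * A) (T : ℝ) (hT : 0 < T)
    (w : Fin n → ℝ) (hw : w ⬝ᵥ w = 1) (heig : (A * B).mulVec w = (1 / T) • w)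
    (hmax : IsGreatest {r : ℝ | ∃ x : Fin n → ℝ, x ⬝ᵥ x = 1 ∧ (A * B).mulVec x ⬝ᵥ x = r}
      (1 / T)) :
    (∀ t ∈ Set.Ico (0 : ℝ) T,
        IsUnit (1 - t • (A * B)) ∧
        ((A * (1 - t • (A * B))⁻¹) * (1 - t • (A * B))).mulVec w = A.mulVec w ∧
        (A * (1 - t • (A * B))⁻¹).mulVec w = (1 - t / T)⁻¹ • A.mulVec w) ∧
      A.mulVec w ≠ 0 ∧
      ∃ w' : Fin n → ℝ,
        Tendsto (fun t : ℝ => (A * (1 - t • (A * B))⁻¹).mulVec w ⬝ᵥ w')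
          (nhdsWithin T (Set.Iio T)) atTop :=
  blowup_time_exactly_T_general A B hAB T hT w hw heig hmax
end
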